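/- arXiv:math/0602662 — 2 statements merged into one kernel-verified Lean document; each statement's English description precedes it below -/
import Mathlib

section
/- Let M = {x ∈ ℝ⁴ : x² + x⁴ > 0}, let Φ : ℝ → ℝ be continuously differentiable, and set q(x) = (x¹)² + (x²)² + (x³)² − (x⁴)². Define the antisymmetric tensor field F on M by F₁₂ = F₁₄ = x¹·Φ(q(x))/(x²+x⁴), F₁₃ = 0, F₂₃ = −F₃₄ = −x³·Φ(q(x))/(x²+x⁴), F₂₄ = Φ(q(x)) (and F_{ji} = −F_{ij}). Then F is closed (∂_iF_{jk} + ∂_jF_{ki} + ∂_kF_{ij} = 0 for all i,j,k) and satisfies the invariance conditions L_ξF = 0 on M for the four vector fields ξ = e₁₂ − e₁₄ = (−x²−x⁴, x¹, 0, −x¹), ξ = e₂₃ + e₃₄ = (0, −x³, x²+x⁴, x³), ξ = e₁₃ = (x³, 0, −x¹, 0) and ξ = e₂₄ = (0, x⁴, 0, x²); hence the Maxwell space (M, F) admits the four-dimensional group G₍₄,₂₀₎ generated by these fields. (This is the class C₍₄,₂₀₎ of the appendix.) -/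
open Real

/-- Partial derivative of a scalar function on ℝ⁴ in the j-th coordinate direction. -/
noncomputable def pd (j : Fin 4) (f : (Fin 4 → ℝ) → ℝ) (x : Fin 4 → ℝ) : ℝ :=
  fderiv ℝ f x (Pi.single j 1)

/-- The (i,j) component of the Lie derivative of the 2-tensor field F along
the vector field ξ at x: Σ_k ξ^k ∂_k F_ij + Σ_k F_kj ∂_i ξ^k + Σ_k F_ik ∂_j ξ^k. -/
noncomputable def lieTen (ξ : (Fin 4 → ℝ) → Fin 4 → ℝ)
    (F : (Fin 4 → ℝ) → Fin 4 → Fin 4 → ℝ) (x : Fin 4 → ℝ) (i j : Fin 4) : ℝ :=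
  (∑ k : Fin 4, ξ x k * pd k (fun y => F y i j) x)
    + (∑ k : Fin 4, F x k j * pd i (fun y => ξ y k) x)
    + ∑ k : Fin 4, F x i k * pd j (fun y => ξ y k) x

/-- Invariance condition L_ξ F = 0 on a set M for a 2-tensor field F. -/
def TenInvariantOn (ξ : (Fin 4 → ℝ) → Fin 4 → ℝ)
    (F : (Fin 4 → ℝ) → Fin 4 → Fin 4 → ℝ) (M : Set (Fin 4 → ℝ)) : Prop :=
  ∀ x ∈ M, ∀ i j, lieTen ξ F x i j = 0

/-- The 2-form F is closed on M: ∂_i F_jk + ∂_j F_ki + ∂_k F_ij = 0. -/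
def ClosedOn (F : (Fin 4 → ℝ) → Fin 4 → Fin 4 → ℝ) (M : Set (Fin 4 → ℝ)) : Prop :=
  ∀ x ∈ M, ∀ i j k : Fin 4,
    pd i (fun y => F y j k) x + pd j (fun y => F y k i) x + pd k (fun y => F y i j) x = 0

def e1 : (Fin 4 → ℝ) → Fin 4 → ℝ := fun _ => ![1, 0, 0, 0]
def e3 : (Fin 4 → ℝ) → Fin 4 → ℝ := fun _ => ![0, 0, 1, 0]
def e13 : (Fin 4 → ℝ) → Fin 4 → ℝ := fun x => ![x 2, 0, -x 0, 0]
def e24 : (Fin 4 → ℝ) → Fin 4 → ℝ := fun x => ![0, x 3, 0, x 1]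

/-- The domain {x : x² + x⁴ > 0}. -/
def Mpos : Set (Fin 4 → ℝ) := {x | 0 < x 1 + x 3}

/-- q(x) = (x¹)² + (x²)² + (x³)² − (x⁴)². -/
def quadQ (x : Fin 4 → ℝ) : ℝ := (x 0) ^ 2 + (x 1) ^ 2 + (x 2) ^ 2 - (x 3) ^ 2

/-- The Maxwell tensor of class C_{4,20}: F₁₂ = F₁₄ = x¹Φ(q)/(x²+x⁴), F₁₃ = 0,
F₂₃ = −F₃₄ = −x³Φ(q)/(x²+x⁴), F₂₄ = Φ(q), and F_{ji} = −F_{ij}. -/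
noncomputable def F420 (Φ : ℝ → ℝ) (x : Fin 4 → ℝ) : Fin 4 → Fin 4 → ℝ :=
  ![![0, x 0 * Φ (quadQ x) / (x 1 + x 3), 0, x 0 * Φ (quadQ x) / (x 1 + x 3)],
    ![-(x 0 * Φ (quadQ x) / (x 1 + x 3)), 0, -(x 2 * Φ (quadQ x) / (x 1 + x 3)),
      Φ (quadQ x)],
    ![0, x 2 * Φ (quadQ x) / (x 1 + x 3), 0, x 2 * Φ (quadQ x) / (x 1 + x 3)],
    ![-(x 0 * Φ (quadQ x) / (x 1 + x 3)), -Φ (quadQ x),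
      -(x 2 * Φ (quadQ x) / (x 1 + x 3)), 0]]

abbrev prj (i : Fin 4) : ((Fin 4 → ℝ) →L[ℝ] ℝ) := ContinuousLinearMap.proj (R := ℝ) i

lemma hcoord (x : Fin 4 → ℝ) (i : Fin 4) : HasFDerivAt (fun y : Fin 4 → ℝ => y i) (prj i) x :=
  hasFDerivAt_apply i x

lemma prj_single (i j : Fin 4) : prj i (Pi.single j (1:ℝ)) = if i = j then 1 else 0 := by
  simp [Pi.single_apply, eq_comm]

lemma hsq (x : Fin 4 → ℝ) (i : Fin 4) :
    HasFDerivAt (fun y : Fin 4 → ℝ => y i ^ 2) ((2 * x i) • prj i) x := by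
  simpa [Function.comp_def] using (hasDerivAt_pow 2 (x i)).comp_hasFDerivAt x (hcoord x i)

lemma hq (x : Fin 4 → ℝ) : HasFDerivAt quadQ
    ((((2 * x 0) • prj 0 + (2 * x 1) • prj 1) + (2 * x 2) • prj 2) - (2 * x 3) • prj 3) x :=
  (((hsq x 0).add (hsq x 1)).add (hsq x 2)).sub (hsq x 3)

lemma hA (Φ : ℝ → ℝ) (hΦ : ContDiff ℝ 1 Φ) (x : Fin 4 → ℝ) :
    HasFDerivAt (fun y => Φ (quadQ y))
      ((deriv Φ (quadQ x)) • ((((2 * x 0) • prj 0 + (2 * x 1) • prj 1) + (2 * x 2) • prj 2)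
        - (2 * x 3) • prj 3)) x :=
  (((hΦ.differentiable one_ne_zero) (quadQ x)).hasDerivAt).comp_hasFDerivAt x (hq x)

lemma hinv (x : Fin 4 → ℝ) (hs : x 1 + x 3 ≠ 0) :
    HasFDerivAt (fun y : Fin 4 → ℝ => (y 1 + y 3)⁻¹)
      ((-((x 1 + x 3) ^ 2)⁻¹) • (prj 1 + prj 3)) x := by
  simpa [Function.comp_def] using (hasDerivAt_inv hs).comp_hasFDerivAt x ((hcoord x 1).fun_add (hcoord x 3))

lemma pd_A (Φ : ℝ → ℝ) (hΦ : ContDiff ℝ 1 Φ) (x : Fin 4 → ℝ) (j : Fin 4) :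
    pd j (fun y => Φ (quadQ y)) x =
      ![2 * x 0 * deriv Φ (quadQ x), 2 * x 1 * deriv Φ (quadQ x),
        2 * x 2 * deriv Φ (quadQ x), -(2 * x 3 * deriv Φ (quadQ x))] j := by
  unfold pd
  rw [(hA Φ hΦ x).fderiv]
  fin_cases j <;> simp [prj_single] <;> ring

lemma pd_u (Φ : ℝ → ℝ) (hΦ : ContDiff ℝ 1 Φ) (x : Fin 4 → ℝ) (hs : x 1 + x 3 ≠ 0) (j : Fin 4) :
    pd j (fun y => y 0 * Φ (quadQ y) / (y 1 + y 3)) x =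
      ![(Φ (quadQ x) + 2 * x 0 ^ 2 * deriv Φ (quadQ x)) / (x 1 + x 3),
        2 * x 0 * x 1 * deriv Φ (quadQ x) / (x 1 + x 3) - x 0 * Φ (quadQ x) / (x 1 + x 3) ^ 2,
        2 * x 0 * x 2 * deriv Φ (quadQ x) / (x 1 + x 3),
        -(2 * x 0 * x 3 * deriv Φ (quadQ x)) / (x 1 + x 3)
          - x 0 * Φ (quadQ x) / (x 1 + x 3) ^ 2] j := by
  unfold pd
  simp only [div_eq_mul_inv]
  rw [(((hcoord x 0).fun_mul (hA Φ hΦ x)).fun_mul (hinv x hs)).fderiv]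
  fin_cases j <;> simp [prj_single] <;> field_simp <;> ring

lemma pd_w (Φ : ℝ → ℝ) (hΦ : ContDiff ℝ 1 Φ) (x : Fin 4 → ℝ) (hs : x 1 + x 3 ≠ 0) (j : Fin 4) :
    pd j (fun y => y 2 * Φ (quadQ y) / (y 1 + y 3)) x =
      ![2 * x 2 * x 0 * deriv Φ (quadQ x) / (x 1 + x 3),
        2 * x 2 * x 1 * deriv Φ (quadQ x) / (x 1 + x 3) - x 2 * Φ (quadQ x) / (x 1 + x 3) ^ 2,
        (Φ (quadQ x) + 2 * x 2 ^ 2 * deriv Φ (quadQ x)) / (x 1 + x 3),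
        -(2 * x 2 * x 3 * deriv Φ (quadQ x)) / (x 1 + x 3)
          - x 2 * Φ (quadQ x) / (x 1 + x 3) ^ 2] j := by
  unfold pd
  simp only [div_eq_mul_inv]
  rw [(((hcoord x 2).fun_mul (hA Φ hΦ x)).fun_mul (hinv x hs)).fderiv]
  fin_cases j <;> simp [prj_single] <;> field_simp <;> ring

lemma pd_neg (f : (Fin 4 → ℝ) → ℝ) (x : Fin 4 → ℝ) (j : Fin 4) :
    pd j (fun y => -(f y)) x = -(pd j f x) := by
  unfold pd; rw [fderiv_fun_neg]; simp

lemma pd_zero (x : Fin 4 → ℝ) (j : Fin 4) : pd j (fun _ => (0:ℝ)) x = 0 := by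
  unfold pd; simp

lemma pd_coord (i : Fin 4) (x : Fin 4 → ℝ) (j : Fin 4) :
    pd j (fun y => y i) x = if i = j then 1 else 0 := by
  unfold pd; rw [(hcoord x i).fderiv]; exact prj_single i j

lemma pd_m13 (x : Fin 4 → ℝ) (j : Fin 4) :
    pd j (fun y : Fin 4 → ℝ => -y 1 - y 3) x =
      -(if (1:Fin 4) = j then (1:ℝ) else 0) - (if (3:Fin 4) = j then (1:ℝ) else 0) := by
  unfold pd; rw [(((hcoord x 1).fun_neg).fun_sub (hcoord x 3)).fderiv]; simp [Pi.single_apply]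

lemma pd_p13 (x : Fin 4 → ℝ) (j : Fin 4) :
    pd j (fun y : Fin 4 → ℝ => y 1 + y 3) x =
      (if (1:Fin 4) = j then (1:ℝ) else 0) + (if (3:Fin 4) = j then (1:ℝ) else 0) := by
  unfold pd; rw [((hcoord x 1).fun_add (hcoord x 3)).fderiv]; simp [Pi.single_apply]

set_option maxHeartbeats 2000000 in
lemma closed_aux (Φ : ℝ → ℝ) (hΦ : ContDiff ℝ 1 Φ) : ClosedOn (F420 Φ) Mpos := by
  intro x hx i j k
  have hx' : 0 < x 1 + x 3 := hx
  have hs : x 1 + x 3 ≠ 0 := ne_of_gt hx'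
  fin_cases i <;> fin_cases j <;> fin_cases k <;>
    (simp [F420, pd_u Φ hΦ x hs, pd_w Φ hΦ x hs, pd_A Φ hΦ x, pd_neg, pd_zero x];
     try field_simp;
     try ring)

set_option maxHeartbeats 2000000 in
lemma inv_aux1 (Φ : ℝ → ℝ) (hΦ : ContDiff ℝ 1 Φ) :
    TenInvariantOn (fun x => ![-x 1 - x 3, x 0, 0, -x 0]) (F420 Φ) Mpos := by
  intro x hx i j
  have hx' : 0 < x 1 + x 3 := hx
  have hs : x 1 + x 3 ≠ 0 := ne_of_gt hx'
  fin_cases i <;> fin_cases j <;>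
    (simp [lieTen, Fin.sum_univ_four, F420, pd_u Φ hΦ x hs, pd_w Φ hΦ x hs, pd_A Φ hΦ x,
       pd_neg, pd_zero x, pd_coord, pd_m13 x, pd_p13 x];
     try field_simp;
     try ring)

set_option maxHeartbeats 2000000 in
lemma inv_aux2 (Φ : ℝ → ℝ) (hΦ : ContDiff ℝ 1 Φ) :
    TenInvariantOn (fun x => ![0, -x 2, x 1 + x 3, x 2]) (F420 Φ) Mpos := by
  intro x hx i j
  have hx' : 0 < x 1 + x 3 := hx
  have hs : x 1 + x 3 ≠ 0 := ne_of_gt hx'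
  fin_cases i <;> fin_cases j <;>
    (simp [lieTen, Fin.sum_univ_four, F420, pd_u Φ hΦ x hs, pd_w Φ hΦ x hs, pd_A Φ hΦ x,
       pd_neg, pd_zero x, pd_coord, pd_m13 x, pd_p13 x];
     try field_simp;
     try ring)

set_option maxHeartbeats 2000000 in
lemma inv_aux3 (Φ : ℝ → ℝ) (hΦ : ContDiff ℝ 1 Φ) :
    TenInvariantOn e13 (F420 Φ) Mpos := by
  intro x hx i j
  have hx' : 0 < x 1 + x 3 := hx
  have hs : x 1 + x 3 ≠ 0 := ne_of_gt hx'
  fin_cases i <;> fin_cases j <;>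
    (simp [lieTen, Fin.sum_univ_four, e13, F420, pd_u Φ hΦ x hs, pd_w Φ hΦ x hs, pd_A Φ hΦ x,
       pd_neg, pd_zero x, pd_coord, pd_m13 x, pd_p13 x];
     try field_simp;
     try ring)

set_option maxHeartbeats 2000000 in
lemma inv_aux4 (Φ : ℝ → ℝ) (hΦ : ContDiff ℝ 1 Φ) :
    TenInvariantOn e24 (F420 Φ) Mpos := by
  intro x hx i j
  have hx' : 0 < x 1 + x 3 := hx
  have hs : x 1 + x 3 ≠ 0 := ne_of_gt hx'
  fin_cases i <;> fin_cases j <;>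
    (simp [lieTen, Fin.sum_univ_four, e24, F420, pd_u Φ hΦ x hs, pd_w Φ hΦ x hs, pd_A Φ hΦ x,
       pd_neg, pd_zero x, pd_coord, pd_m13 x, pd_p13 x];
     try field_simp;
     try ring)

set_option maxHeartbeats 1000000 in
/-- Class C_{4,20}: the tensor F420 is antisymmetric, closed, and invariant under
e₁₂−e₁₄, e₂₃+e₃₄, e₁₃ and e₂₄ on {x² + x⁴ > 0}. -/
theorem class_C420 (Φ : ℝ → ℝ) (hΦ : ContDiff ℝ 1 Φ) :
    (∀ x i j, F420 Φ x i j = -F420 Φ x j i) ∧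
    ClosedOn (F420 Φ) Mpos ∧
    TenInvariantOn (fun x => ![-x 1 - x 3, x 0, 0, -x 0]) (F420 Φ) Mpos ∧
    TenInvariantOn (fun x => ![0, -x 2, x 1 + x 3, x 2]) (F420 Φ) Mpos ∧
    TenInvariantOn e13 (F420 Φ) Mpos ∧
    TenInvariantOn e24 (F420 Φ) Mpos := by
  refine ⟨?_, closed_aux Φ hΦ, inv_aux1 Φ hΦ, inv_aux2 Φ hΦ, inv_aux3 Φ hΦ, inv_aux4 Φ hΦ⟩
  intro x i j
  fin_cases i <;> fin_cases j <;> simp [F420]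
end

section
/- Fix λ ≠ 0, let M = {x ∈ ℝ⁴ : x² + x⁴ > 0}, write s = x² + x⁴, and let a₁, a₂ ∈ ℝ be constants. Define the antisymmetric tensor field F on M by F₁₂ = F₁₄ = Φ, F₁₃ = F₂₄ = 0, F₂₃ = −F₃₄ = Ψ (and F_{ji} = −F_{ij}), where Φ(x) = (a₁·cos(ln(s)/λ) − a₂·sin(ln(s)/λ))/s and Ψ(x) = (a₁·sin(ln(s)/λ) + a₂·cos(ln(s)/λ))/s. Then F is closed (∂_iF_{jk} + ∂_jF_{ki} + ∂_kF_{ij} = 0 for all i,j,k) and satisfies the invariance conditions L_ξF = 0 on M for the six vector fields ξ = e₁₂ − e₁₄ = (−x²−x⁴, x¹, 0, −x¹), ξ = e₂₃ + e₃₄ = (0, −x³, x²+x⁴, x³), ξ = e₁₃ + λe₂₄ = (x³, λx⁴, −x¹, λx²), ξ = e₁, ξ = e₃ and ξ = e₂ − e₄ = (0,1,0,−1); hence the Maxwell space (M, F) admits the six-dimensional group generated by these fields. (This is the class C₍₆,₇₎ of the appendix.) -/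
open Real

/-- Φ of class C_{6,7}. -/
noncomputable def Phi67 (l a1 a2 : ℝ) (x : Fin 4 → ℝ) : ℝ :=
  (a1 * cos (log (x 1 + x 3) / l) - a2 * sin (log (x 1 + x 3) / l)) / (x 1 + x 3)

/-- Ψ of class C_{6,7}. -/
noncomputable def Psi67 (l a1 a2 : ℝ) (x : Fin 4 → ℝ) : ℝ :=
  (a1 * sin (log (x 1 + x 3) / l) + a2 * cos (log (x 1 + x 3) / l)) / (x 1 + x 3)

/-- The Maxwell tensor of class C_{6,7}: F₁₂ = F₁₄ = Φ, F₁₃ = F₂₄ = 0,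
F₂₃ = −F₃₄ = Ψ, and F_{ji} = −F_{ij}. -/
noncomputable def F67 (l a1 a2 : ℝ) (x : Fin 4 → ℝ) : Fin 4 → Fin 4 → ℝ :=
  ![![0, Phi67 l a1 a2 x, 0, Phi67 l a1 a2 x],
    ![-Phi67 l a1 a2 x, 0, Psi67 l a1 a2 x, 0],
    ![0, -Psi67 l a1 a2 x, 0, -Psi67 l a1 a2 x],
    ![-Phi67 l a1 a2 x, 0, Psi67 l a1 a2 x, 0]]

/-! ### Auxiliary lemmas -/

lemma pd_const' (j : Fin 4) (c : ℝ) (x : Fin 4 → ℝ) : pd j (fun _ => c) x = 0 := by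
  simp [pd]

lemma pd_of_hasFDerivAt' {f : (Fin 4 → ℝ) → ℝ} {L : (Fin 4 → ℝ) →L[ℝ] ℝ} {x : Fin 4 → ℝ}
    (h : HasFDerivAt f L x) (j : Fin 4) : pd j f x = L (Pi.single j 1) := by
  rw [pd, h.fderiv]

lemma hasFDerivAt_proj' (m : Fin 4) (x : Fin 4 → ℝ) :
    HasFDerivAt (fun y : Fin 4 → ℝ => y m)
      (ContinuousLinearMap.proj (R := ℝ) (φ := fun _ : Fin 4 => ℝ) m) x := by
  exact ContinuousLinearMap.hasFDerivAt (ContinuousLinearMap.proj (R := ℝ) (φ := fun _ : Fin 4 => ℝ) m)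

lemma pd_proj' (j m : Fin 4) (x : Fin 4 → ℝ) :
    pd j (fun y => y m) x = (Pi.single j 1 : Fin 4 → ℝ) m := by
  simpa using pd_of_hasFDerivAt' (hasFDerivAt_proj' m x) j

lemma pd_neg_proj' (j m : Fin 4) (x : Fin 4 → ℝ) :
    pd j (fun y => -y m) x = -(Pi.single j 1 : Fin 4 → ℝ) m := by
  simpa using pd_of_hasFDerivAt' (f := fun y => -y m) (hasFDerivAt_proj' m x).neg j

lemma pd_mul_proj' (c : ℝ) (j m : Fin 4) (x : Fin 4 → ℝ) :
    pd j (fun y => c * y m) x = c * (Pi.single j 1 : Fin 4 → ℝ) m := by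
  simpa using pd_of_hasFDerivAt' ((hasFDerivAt_proj' m x).const_mul c) j

lemma pd_sub13' (j : Fin 4) (x : Fin 4 → ℝ) :
    pd j (fun y => -y 1 - y 3) x
      = -(Pi.single j 1 : Fin 4 → ℝ) 1 - (Pi.single j 1 : Fin 4 → ℝ) 3 := by
  simpa using pd_of_hasFDerivAt' (f := fun y => -y 1 - y 3) ((hasFDerivAt_proj' 1 x).neg.sub (hasFDerivAt_proj' 3 x)) j

lemma pd_add13' (j : Fin 4) (x : Fin 4 → ℝ) :
    pd j (fun y => y 1 + y 3) x
      = (Pi.single j 1 : Fin 4 → ℝ) 1 + (Pi.single j 1 : Fin 4 → ℝ) 3 := by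
  simpa using pd_of_hasFDerivAt' (f := fun y => y 1 + y 3) ((hasFDerivAt_proj' 1 x).add (hasFDerivAt_proj' 3 x)) j

lemma hasDerivAt_phiAux (l a1 a2 : ℝ) (hl : l ≠ 0) {s : ℝ} (hs : 0 < s) :
    HasDerivAt (fun t => (a1 * cos (log t / l) - a2 * sin (log t / l)) / t)
      (-(((a1 * sin (log s / l) + a2 * cos (log s / l)) / s) / l
        + (a1 * cos (log s / l) - a2 * sin (log s / l)) / s) / s) s := by
  have hlog : HasDerivAt (fun t : ℝ => log t / l) (s⁻¹ / l) s :=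
    (Real.hasDerivAt_log hs.ne').div_const l
  have hc : HasDerivAt (fun t : ℝ => cos (log t / l)) (-sin (log s / l) * (s⁻¹ / l)) s :=
    (Real.hasDerivAt_cos _).comp s hlog
  have hsn : HasDerivAt (fun t : ℝ => sin (log t / l)) (cos (log s / l) * (s⁻¹ / l)) s :=
    (Real.hasDerivAt_sin _).comp s hlog
  have hnum : HasDerivAt (fun t => a1 * cos (log t / l) - a2 * sin (log t / l)) _ s :=
    (hc.const_mul a1).sub (hsn.const_mul a2)
  have h : HasDerivAt (fun t => (a1 * cos (log t / l) - a2 * sin (log t / l)) / t) _ s :=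
    hnum.div (hasDerivAt_id s) hs.ne'
  convert h using 1
  field_simp
  ring

lemma hasDerivAt_psiAux (l a1 a2 : ℝ) (hl : l ≠ 0) {s : ℝ} (hs : 0 < s) :
    HasDerivAt (fun t => (a1 * sin (log t / l) + a2 * cos (log t / l)) / t)
      ((((a1 * cos (log s / l) - a2 * sin (log s / l)) / s) / l
        - (a1 * sin (log s / l) + a2 * cos (log s / l)) / s) / s) s := by
  have hlog : HasDerivAt (fun t : ℝ => log t / l) (s⁻¹ / l) s :=
    (Real.hasDerivAt_log hs.ne').div_const l
  have hc : HasDerivAt (fun t : ℝ => cos (log t / l)) (-sin (log s / l) * (s⁻¹ / l)) s :=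
    (Real.hasDerivAt_cos _).comp s hlog
  have hsn : HasDerivAt (fun t : ℝ => sin (log t / l)) (cos (log s / l) * (s⁻¹ / l)) s :=
    (Real.hasDerivAt_sin _).comp s hlog
  have hnum : HasDerivAt (fun t => a1 * sin (log t / l) + a2 * cos (log t / l)) _ s :=
    (hsn.const_mul a1).add (hc.const_mul a2)
  have h : HasDerivAt (fun t => (a1 * sin (log t / l) + a2 * cos (log t / l)) / t) _ s :=
    hnum.div (hasDerivAt_id s) hs.ne'
  convert h using 1
  field_simp
  ring

noncomputable def L13 : (Fin 4 → ℝ) →L[ℝ] ℝ :=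
  ContinuousLinearMap.proj (R := ℝ) (φ := fun _ : Fin 4 => ℝ) 1
    + ContinuousLinearMap.proj (R := ℝ) (φ := fun _ : Fin 4 => ℝ) 3

lemma hasFDerivAt_s' (x : Fin 4 → ℝ) :
    HasFDerivAt (fun y : Fin 4 → ℝ => y 1 + y 3) L13 x := by
  exact ContinuousLinearMap.hasFDerivAt L13

lemma hasFDerivAt_Phi67 (l a1 a2 : ℝ) (hl : l ≠ 0) {x : Fin 4 → ℝ} (hx : 0 < x 1 + x 3) :
    HasFDerivAt (Phi67 l a1 a2)
      ((-(Psi67 l a1 a2 x / l + Phi67 l a1 a2 x) / (x 1 + x 3)) • L13) x := by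
  exact (hasDerivAt_phiAux l a1 a2 hl hx).comp_hasFDerivAt x (hasFDerivAt_s' x)

lemma hasFDerivAt_Psi67 (l a1 a2 : ℝ) (hl : l ≠ 0) {x : Fin 4 → ℝ} (hx : 0 < x 1 + x 3) :
    HasFDerivAt (Psi67 l a1 a2)
      (((Phi67 l a1 a2 x / l - Psi67 l a1 a2 x) / (x 1 + x 3)) • L13) x := by
  exact (hasDerivAt_psiAux l a1 a2 hl hx).comp_hasFDerivAt x (hasFDerivAt_s' x)

lemma pd_Phi67 (l a1 a2 : ℝ) (hl : l ≠ 0) {x : Fin 4 → ℝ} (hx : 0 < x 1 + x 3) (j : Fin 4) :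
    pd j (fun y => Phi67 l a1 a2 y) x
      = (-(Psi67 l a1 a2 x / l + Phi67 l a1 a2 x) / (x 1 + x 3))
        * ((Pi.single j 1 : Fin 4 → ℝ) 1 + (Pi.single j 1 : Fin 4 → ℝ) 3) := by
  rw [show (fun y => Phi67 l a1 a2 y) = Phi67 l a1 a2 from rfl, pd,
    (hasFDerivAt_Phi67 l a1 a2 hl hx).fderiv]
  simp [L13]; ring

lemma pd_Psi67 (l a1 a2 : ℝ) (hl : l ≠ 0) {x : Fin 4 → ℝ} (hx : 0 < x 1 + x 3) (j : Fin 4) :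
    pd j (fun y => Psi67 l a1 a2 y) x
      = ((Phi67 l a1 a2 x / l - Psi67 l a1 a2 x) / (x 1 + x 3))
        * ((Pi.single j 1 : Fin 4 → ℝ) 1 + (Pi.single j 1 : Fin 4 → ℝ) 3) := by
  rw [show (fun y => Psi67 l a1 a2 y) = Psi67 l a1 a2 from rfl, pd,
    (hasFDerivAt_Psi67 l a1 a2 hl hx).fderiv]
  simp [L13]; ring

lemma pd_negPhi67 (l a1 a2 : ℝ) (hl : l ≠ 0) {x : Fin 4 → ℝ} (hx : 0 < x 1 + x 3) (j : Fin 4) :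
    pd j (fun y => -Phi67 l a1 a2 y) x
      = -((-(Psi67 l a1 a2 x / l + Phi67 l a1 a2 x) / (x 1 + x 3))
        * ((Pi.single j 1 : Fin 4 → ℝ) 1 + (Pi.single j 1 : Fin 4 → ℝ) 3)) := by
  rw [pd, (HasFDerivAt.fderiv (f := fun y => -Phi67 l a1 a2 y) (hasFDerivAt_Phi67 l a1 a2 hl hx).neg)]
  simp [L13]; ring

lemma pd_negPsi67 (l a1 a2 : ℝ) (hl : l ≠ 0) {x : Fin 4 → ℝ} (hx : 0 < x 1 + x 3) (j : Fin 4) :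
    pd j (fun y => -Psi67 l a1 a2 y) x
      = -(((Phi67 l a1 a2 x / l - Psi67 l a1 a2 x) / (x 1 + x 3))
        * ((Pi.single j 1 : Fin 4 → ℝ) 1 + (Pi.single j 1 : Fin 4 → ℝ) 3)) := by
  rw [pd, (HasFDerivAt.fderiv (f := fun y => -Psi67 l a1 a2 y) (hasFDerivAt_Psi67 l a1 a2 hl hx).neg)]
  simp [L13]; ring

set_option maxHeartbeats 2000000 in
/-- Class C_{6,7}: the tensor F67 is antisymmetric, closed, and invariant under
e₁₂−e₁₄, e₂₃+e₃₄, e₁₃+λe₂₄, e₁, e₃ and e₂−e₄ on {x² + x⁴ > 0}. -/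
theorem class_C67 (l a1 a2 : ℝ) (hl : l ≠ 0) :
    (∀ x i j, F67 l a1 a2 x i j = -F67 l a1 a2 x j i) ∧
    ClosedOn (F67 l a1 a2) Mpos ∧
    TenInvariantOn (fun x => ![-x 1 - x 3, x 0, 0, -x 0]) (F67 l a1 a2) Mpos ∧
    TenInvariantOn (fun x => ![0, -x 2, x 1 + x 3, x 2]) (F67 l a1 a2) Mpos ∧
    TenInvariantOn (fun x => ![x 2, l * x 3, -x 0, l * x 1]) (F67 l a1 a2) Mpos ∧
    TenInvariantOn e1 (F67 l a1 a2) Mpos ∧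
    TenInvariantOn e3 (F67 l a1 a2) Mpos ∧
    TenInvariantOn (fun _ => ![0, 1, 0, -1]) (F67 l a1 a2) Mpos := by
  refine ⟨?_, ?_, ?_, ?_, ?_, ?_, ?_, ?_⟩
  · intro x i j
    fin_cases i <;> fin_cases j <;> simp [F67]
  · intro x hx i j k
    have hs : 0 < x 1 + x 3 := hx
    have hsne : x 1 + x 3 ≠ 0 := hs.ne'
    fin_cases i <;> fin_cases j <;> fin_cases k <;>
      simp only [F67, Fin.zero_eta, Fin.mk_one, Fin.reduceFinMk,
        Matrix.cons_val_zero, Matrix.cons_val_one, Matrix.head_cons,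
        Matrix.cons_val_two, Matrix.tail_cons, Matrix.cons_val_three, Fin.isValue,
        pd_Phi67 l a1 a2 hl hs, pd_Psi67 l a1 a2 hl hs, pd_negPhi67 l a1 a2 hl hs,
        pd_negPsi67 l a1 a2 hl hs, pd_const'] <;>
      (try simp [Pi.single_apply]) <;> (try field_simp) <;> (try ring)
  all_goals {
    intro x hx i j
    have hs : 0 < x 1 + x 3 := hx
    have hsne : x 1 + x 3 ≠ 0 := hs.ne'
    fin_cases i <;> fin_cases j <;>
      simp only [lieTen, Fin.sum_univ_four, F67, e1, e3, Fin.zero_eta, Fin.mk_one,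
        Fin.reduceFinMk, Matrix.cons_val_zero, Matrix.cons_val_one, Matrix.head_cons,
        Matrix.cons_val_two, Matrix.tail_cons, Matrix.cons_val_three, Fin.isValue,
        pd_Phi67 l a1 a2 hl hs, pd_Psi67 l a1 a2 hl hs, pd_negPhi67 l a1 a2 hl hs,
        pd_negPsi67 l a1 a2 hl hs, pd_const', pd_proj', pd_neg_proj', pd_mul_proj',
        pd_sub13', pd_add13'] <;>
      (try simp [Pi.single_apply]) <;> (try field_simp) <;> (try ring)
  }
end
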